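/- Let b ≥ 2, α > 1, T ≥ s ≥ 1, and let t be the b-ary tree of depth T pruned at a vertex of depth s. For any labels x_v ≥ 0 on vertices of t such that every root-to-leaf path sum (to depth T) is at least ℓ > 0, one has ∑_{v ∈ t} x_v^α ≥ (1 - b^{-s})^{α+1} (b^{1/(α-1)} - 1)^{α-1} ℓ^α. -/

import Mathlib

open scoped Classical

/-- A vertex `v` at depth `k` of the complete `b`-ary tree belongs to the tree pruned
at the vertex `u` of depth `s` iff the first `s` coordinates of `v` do not all agree
with `u`. -/
def prunedKept (b s k : ℕ) (u : Fin s → Fin b) (v : Fin k → Fin b) : Prop :=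
  ∀ h : s ≤ k, ∃ i : Fin s, v (Fin.castLE h i) ≠ u i

/-!
Write `A k` for the total label on the kept vertices of depth `k` and `δ = 1 - b^{-s}`.
Averaging the path condition over the `δ b^T` kept leaves, and noting that a vertex of depth `k`
lies below `b^{T-k}` leaves, gives `δ ℓ ≤ ∑ₖ A k / b^k`. Convexity on each level (at most `b^k`
vertices) gives `b^k (A k / b^k)^α ≤ ∑ x_v^α`, and Hölder's inequality with the geometric weights
`q^{-k}`, `q = b^{1/(α-1)}`, whose sum is at most `1/(q - 1)`, turns `∑ₖ b^k (A k / b^k)^α` into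
`(q - 1)^{α-1} (∑ₖ A k / b^k)^α`.
-/

open Finset Real

theorem Real.rpow_sum_le_sum_weight_rpow_mul {ι : Type*} (s : Finset ι) {p : ℝ} (hp : 1 ≤ p)
    (w y : ι → ℝ) (hw : ∀ i, 0 < w i) (hy : ∀ i, 0 ≤ y i) :
    (∑ i ∈ s, y i) ^ p ≤ (∑ i ∈ s, w i) ^ (p - 1) * ∑ i ∈ s, w i ^ (1 - p) * y i ^ p := by
  have hW : 0 ≤ ∑ i ∈ s, w i := sum_nonneg fun i _ => (hw i).le
  have hS : 0 ≤ ∑ i ∈ s, w i ^ (1 - p) * y i ^ p := sum_nonneg fun i _ => by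
    have := hw i; have := hy i; positivity
  have holder := inner_le_weight_mul_Lp_of_nonneg s hp w (fun i => y i / w i)
    (fun i => (hw i).le) (fun i => div_nonneg (hy i) (hw i).le)
  have hwy : ∀ i, w i * (y i / w i) = y i := fun i => mul_div_cancel₀ _ (hw i).ne'
  have hwyp : ∀ i, w i * (y i / w i) ^ p = w i ^ (1 - p) * y i ^ p := fun i => by
    rw [div_rpow (hy i) (hw i).le, rpow_sub (hw i), rpow_one]
    field_simp
  simp only [hwy, hwyp] at holder
  have hp0 : 0 < p := by linarith
  calc (∑ i ∈ s, y i) ^ p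
      ≤ ((∑ i ∈ s, w i) ^ (1 - p⁻¹) * (∑ i ∈ s, w i ^ (1 - p) * y i ^ p) ^ p⁻¹) ^ p :=
        rpow_le_rpow (sum_nonneg fun i _ => hy i) holder hp0.le
    _ = (∑ i ∈ s, w i) ^ (p - 1) * ∑ i ∈ s, w i ^ (1 - p) * y i ^ p := by
        rw [mul_rpow (by positivity) (by positivity), ← rpow_mul hW, ← rpow_mul hS,
          inv_mul_cancel₀ hp0.ne', rpow_one, sub_mul, one_mul, inv_mul_cancel₀ hp0.ne']

theorem Real.mul_rpow_sum_div_le_sum_rpow {ι : Type*} (s : Finset ι) {p : ℝ} (hp : 1 ≤ p)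
    (f : ι → ℝ) (hf : ∀ i, 0 ≤ f i) {N : ℝ} (hN : 0 < N) (hsN : (#s : ℝ) ≤ N) :
    N * ((∑ i ∈ s, f i) / N) ^ p ≤ ∑ i ∈ s, f i ^ p := by
  have h := rpow_sum_le_sum_weight_rpow_mul s hp (fun _ => 1) f (fun _ => one_pos) hf
  simp only [one_rpow, one_mul, sum_const, nsmul_eq_mul, mul_one] at h
  have hfp : 0 ≤ ∑ i ∈ s, f i ^ p := sum_nonneg fun i _ => rpow_nonneg (hf i) p
  have hNp : 0 < N ^ (p - 1) := rpow_pos_of_pos hN _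
  calc N * ((∑ i ∈ s, f i) / N) ^ p = (∑ i ∈ s, f i) ^ p / N ^ (p - 1) := by
        rw [div_rpow (sum_nonneg fun i _ => hf i) hN.le, rpow_sub hN, rpow_one]
        field_simp
    _ ≤ ∑ i ∈ s, f i ^ p := by
        rw [div_le_iff₀ hNp, mul_comm]
        exact h.trans (mul_le_mul_of_nonneg_right
          (rpow_le_rpow (Nat.cast_nonneg _) hsN (by linarith)) hfp)

theorem sum_inv_pow_le_inv_sub_one {K : Finset ℕ} (hK : 0 ∉ K) {q : ℝ} (hq : 1 < q) :
    ∑ k ∈ K, q⁻¹ ^ k ≤ (q - 1)⁻¹ := by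
  have hr0 : 0 ≤ q⁻¹ := by positivity
  have hr1 : q⁻¹ < 1 := inv_lt_one_of_one_lt₀ hq
  have h := (summable_geometric_of_lt_one hr0 hr1).sum_le_tsum (insert 0 K)
    (fun k _ => pow_nonneg hr0 k)
  rw [sum_insert hK, pow_zero, tsum_geometric_of_lt_one hr0 hr1] at h
  have : (1 - q⁻¹)⁻¹ - 1 = (q - 1)⁻¹ := by
    have : q - 1 ≠ 0 := by linarith
    field_simp
    ring
  linarith

theorem sub_one_rpow_mul_rpow_sum_le {K : Finset ℕ} (hK : 0 ∉ K) {q p : ℝ} (hq : 1 < q)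
    (hp : 1 ≤ p) (y : ℕ → ℝ) (hy : ∀ k, 0 ≤ y k) :
    (q - 1) ^ (p - 1) * (∑ k ∈ K, y k) ^ p ≤ ∑ k ∈ K, (q ^ (p - 1)) ^ k * y k ^ p := by
  have hq0 : 0 < q := by linarith
  have hr0 : 0 < q⁻¹ := inv_pos.mpr hq0
  have hweight : ∀ k : ℕ, (q⁻¹ ^ k) ^ (1 - p) = (q ^ (p - 1)) ^ k := fun k => by
    rw [inv_pow, inv_rpow (by positivity), ← rpow_neg (by positivity), neg_sub,
      ← rpow_natCast, ← rpow_natCast, ← rpow_mul hq0.le, ← rpow_mul hq0.le, mul_comm]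
  have h := rpow_sum_le_sum_weight_rpow_mul K hp (fun k => q⁻¹ ^ k) y
    (fun k => pow_pos hr0 k) hy
  simp only [hweight] at h
  have hq1 : 0 < q - 1 := by linarith
  have hW0 : 0 ≤ ∑ k ∈ K, q⁻¹ ^ k := sum_nonneg fun k _ => pow_nonneg hr0.le k
  have hS : 0 ≤ ∑ k ∈ K, (q ^ (p - 1)) ^ k * y k ^ p := sum_nonneg fun k _ => by
    have := hy k; positivity
  calc (q - 1) ^ (p - 1) * (∑ k ∈ K, y k) ^ p
      ≤ (q - 1) ^ (p - 1) * ((∑ k ∈ K, q⁻¹ ^ k) ^ (p - 1) * ∑ k ∈ K, (q ^ (p - 1)) ^ k * y k ^ p) :=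
        mul_le_mul_of_nonneg_left h (by positivity)
    _ = ((q - 1) * ∑ k ∈ K, q⁻¹ ^ k) ^ (p - 1) * ∑ k ∈ K, (q ^ (p - 1)) ^ k * y k ^ p := by
        rw [mul_rpow hq1.le hW0, mul_assoc]
    _ ≤ ∑ k ∈ K, (q ^ (p - 1)) ^ k * y k ^ p := by
        refine mul_le_of_le_one_left hS (rpow_le_one (by positivity) ?_ (by linarith))
        rw [← le_div_iff₀' hq1, one_div]
        exact sum_inv_pow_le_inv_sub_one hK hq

theorem Fin.sum_comp_take {β M : Type*} [Fintype β] [AddCommMonoid M] {k n : ℕ} (h : k ≤ n)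
    (f : (Fin k → β) → M) :
    ∑ w : Fin n → β, f (Fin.take k h w) = Fintype.card β ^ (n - k) • ∑ v, f v := by
  obtain ⟨d, rfl⟩ := Nat.exists_eq_add_of_le h
  rw [← (Fin.appendEquiv k d).sum_comp, Fintype.sum_prod_type, ← Finset.sum_nsmul]
  refine Finset.sum_congr rfl fun v _ => ?_
  simp [Fin.appendEquiv, Fin.take_append_left k le_rfl]

theorem Fin.card_filter_take_eq {β : Type*} [Fintype β] [DecidableEq β] {k n : ℕ} (h : k ≤ n)
    (v : Fin k → β) :
    #{w : Fin n → β | Fin.take k h w = v} = Fintype.card β ^ (n - k) := by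
  rw [card_filter, Fin.sum_comp_take h (fun v' => if v' = v then 1 else 0)]
  simp

theorem prunedKept_iff_take_ne {b s k : ℕ} (u : Fin s → Fin b) (v : Fin k → Fin b) (h : s ≤ k) :
    prunedKept b s k u v ↔ Fin.take s h v ≠ u := by
  simp [prunedKept, h, funext_iff]

theorem prunedKept.take {b s n k : ℕ} {u : Fin s → Fin b} {w : Fin n → Fin b}
    (hw : prunedKept b s n u w) (hk : k ≤ n) : prunedKept b s k u (Fin.take k hk w) :=
  fun hsk => hw (hsk.trans hk)

theorem card_prunedKept_add {b s T : ℕ} (hsT : s ≤ T) (u : Fin s → Fin b) :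
    #(univ.filter (prunedKept b s T u)) + b ^ (T - s) = b ^ T := by
  have hcut : univ.filter (fun w => ¬ prunedKept b s T u w) =
      univ.filter (fun w : Fin T → Fin b => Fin.take s hsT w = u) := by
    ext w
    simp [prunedKept_iff_take_ne u w hsT]
  have h := Fin.card_filter_take_eq (n := T) hsT u
  rw [Fintype.card_fin, ← hcut] at h
  rw [← h, card_filter_add_card_filter_not, card_univ, Fintype.card_fun,
    Fintype.card_fin, Fintype.card_fin]

theorem sum_prunedKept_comp_take_le {b s k T : ℕ} (u : Fin s → Fin b) (hk : k ≤ T)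
    (f : (Fin k → Fin b) → ℝ) (hf : ∀ v, 0 ≤ f v) :
    ∑ w ∈ univ.filter (prunedKept b s T u), f (Fin.take k hk w) ≤
      b ^ (T - k) * ∑ v ∈ univ.filter (prunedKept b s k u), f v := by
  calc ∑ w ∈ univ.filter (prunedKept b s T u), f (Fin.take k hk w)
      ≤ ∑ w ∈ univ.filter (fun w : Fin T → Fin b => prunedKept b s k u (Fin.take k hk w)),
          f (Fin.take k hk w) :=
        sum_le_sum_of_subset_of_nonneg
          (fun w hw => by simpa using (mem_filter.mp hw).2.take hk) fun _ _ _ => hf _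
    _ = b ^ (T - k) * ∑ v ∈ univ.filter (prunedKept b s k u), f v := by
        simpa [sum_filter] using
          Fin.sum_comp_take hk (fun v => if prunedKept b s k u v then f v else 0)

theorem one_sub_zpow_mul_le_sum_div_pow {b s T : ℕ} (hb : 0 < b) (hsT : s ≤ T)
    (u : Fin s → Fin b) {ℓ : ℝ} (x : (k : ℕ) → (Fin k → Fin b) → ℝ)
    (hx : ∀ k (v : Fin k → Fin b), 0 ≤ x k v)
    (hpath : ∀ w : Fin T → Fin b, prunedKept b s T u w →
      ℓ ≤ ∑ k ∈ (Icc 1 T).attach, x k.1 (Fin.take k.1 (mem_Icc.mp k.2).2 w)) :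
    (1 - (b : ℝ) ^ (-(s : ℤ))) * ℓ ≤
      ∑ k ∈ Icc 1 T, (∑ v ∈ univ.filter (prunedKept b s k u), x k v) / (b : ℝ) ^ k := by
  set leaves := univ.filter (prunedKept b s T u)
  have hb0 : (b : ℝ) ≠ 0 := by positivity
  have hcard : (#leaves : ℝ) = (b : ℝ) ^ T * (1 - (b : ℝ) ^ (-(s : ℤ))) := by
    have h : (#leaves : ℝ) + (b : ℝ) ^ (T - s) = (b : ℝ) ^ T := by
      exact_mod_cast card_prunedKept_add hsT u
    rw [zpow_neg, zpow_natCast, mul_sub, mul_one, ← pow_sub₀ _ hb0 hsT]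
    linarith
  refine le_of_mul_le_mul_left ?_ (pow_pos (Nat.cast_pos.mpr hb) T)
  calc (b : ℝ) ^ T * ((1 - (b : ℝ) ^ (-(s : ℤ))) * ℓ) = #leaves • ℓ := by
        rw [nsmul_eq_mul, hcard, mul_assoc]
    _ ≤ ∑ w ∈ leaves, ∑ k ∈ (Icc 1 T).attach, x k.1 (Fin.take k.1 (mem_Icc.mp k.2).2 w) :=
        card_nsmul_le_sum _ _ _ fun w hw => hpath w (mem_filter.mp hw).2
    _ = ∑ k ∈ (Icc 1 T).attach, ∑ w ∈ leaves, x k.1 (Fin.take k.1 (mem_Icc.mp k.2).2 w) :=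
        sum_comm
    _ ≤ ∑ k ∈ (Icc 1 T).attach,
          (b : ℝ) ^ (T - k.1) * ∑ v ∈ univ.filter (prunedKept b s k.1 u), x k.1 v :=
        sum_le_sum fun k _ => sum_prunedKept_comp_take_le u _ (x k.1) (hx k.1)
    _ = (b : ℝ) ^ T *
          ∑ k ∈ Icc 1 T, (∑ v ∈ univ.filter (prunedKept b s k u), x k v) / (b : ℝ) ^ k := by
        rw [sum_attach (Icc 1 T) (fun k => (b : ℝ) ^ (T - k) *
          ∑ v ∈ univ.filter (prunedKept b s k u), x k v), mul_sum]
        refine sum_congr rfl fun k hk => ?_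
        rw [pow_sub₀ _ hb0 (mem_Icc.mp hk).2]
        ring

theorem pruned_tree_power_sum_bound_general (b s T : ℕ) (hb : 2 ≤ b) (hsT : s ≤ T)
    (α : ℝ) (hα : 1 < α) (u : Fin s → Fin b) (ℓ : ℝ) (hℓ : 0 < ℓ)
    (x : (k : ℕ) → (Fin k → Fin b) → ℝ)
    (hx : ∀ k (v : Fin k → Fin b), 0 ≤ x k v)
    (hpath : ∀ w : Fin T → Fin b, prunedKept b s T u w →
      ℓ ≤ ∑ k ∈ (Finset.Icc 1 T).attach,
        x k.1 (fun i : Fin k.1 => w (Fin.castLE (Finset.mem_Icc.mp k.2).2 i))) :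
    (1 - (b : ℝ) ^ (-(s : ℤ))) ^ (α + 1) * ((b : ℝ) ^ (1 / (α - 1)) - 1) ^ (α - 1) * ℓ ^ α ≤
      ∑ k ∈ Finset.Icc 1 T, ∑ v ∈ Finset.univ.filter (prunedKept b s k u), x k v ^ α := by
  set δ := 1 - (b : ℝ) ^ (-(s : ℤ))
  set q := (b : ℝ) ^ (1 / (α - 1))
  set A := fun k => ∑ v ∈ univ.filter (prunedKept b s k u), x k v
  have hB : (1 : ℝ) < b := by exact_mod_cast hb
  have hδ0 : 0 ≤ δ := sub_nonneg.mpr (zpow_le_one_of_nonpos₀ hB.le (by simp))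
  have hδ1 : δ ≤ 1 := sub_le_self _ (zpow_nonneg (by positivity) _)
  have hq : 1 < q := one_lt_rpow hB (div_pos one_pos (by linarith))
  have hqα : q ^ (α - 1) = b := by
    rw [← rpow_mul (by positivity), one_div_mul_cancel (by linarith), rpow_one]
  have hmean := one_sub_zpow_mul_le_sum_div_pow (by omega) hsT u x hx hpath
  have hlevel : ∀ k ∈ Icc 1 T, (b : ℝ) ^ k * (A k / (b : ℝ) ^ k) ^ α ≤
      ∑ v ∈ univ.filter (prunedKept b s k u), x k v ^ α := fun k _ =>
    mul_rpow_sum_div_le_sum_rpow _ hα.le (x k) (hx k) (by positivity) (by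
      exact_mod_cast (card_le_univ (univ.filter (prunedKept b s k u))).trans_eq (by simp))
  have hq1 : 0 ≤ (q - 1) ^ (α - 1) := rpow_nonneg (by linarith) _
  have hδα : δ ^ (α + 1) ≤ δ ^ α := rpow_le_rpow_of_exponent_ge' hδ0 hδ1 (by linarith) (by linarith)
  calc δ ^ (α + 1) * (q - 1) ^ (α - 1) * ℓ ^ α ≤ δ ^ α * (q - 1) ^ (α - 1) * ℓ ^ α := by
        gcongr
    _ = (q - 1) ^ (α - 1) * (δ * ℓ) ^ α := by
        rw [mul_rpow hδ0 hℓ.le]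
        ring
    _ ≤ (q - 1) ^ (α - 1) * (∑ k ∈ Icc 1 T, A k / (b : ℝ) ^ k) ^ α := by
        gcongr
    _ ≤ ∑ k ∈ Icc 1 T, (b : ℝ) ^ k * (A k / (b : ℝ) ^ k) ^ α := by
        simpa only [hqα] using sub_one_rpow_mul_rpow_sum_le (by simp) hq hα.le
          (fun k => A k / (b : ℝ) ^ k) fun k =>
            div_nonneg (sum_nonneg fun v _ => hx k v) (by positivity)
    _ ≤ _ := sum_le_sum hlevel

theorem pruned_tree_power_sum_bound (b s T : ℕ) (hb : 2 ≤ b) (hs : 1 ≤ s) (hsT : s ≤ T)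
    (α : ℝ) (hα : 1 < α) (u : Fin s → Fin b) (ℓ : ℝ) (hℓ : 0 < ℓ)
    (x : (k : ℕ) → (Fin k → Fin b) → ℝ)
    (hx : ∀ k (v : Fin k → Fin b), 0 ≤ x k v)
    (hpath : ∀ w : Fin T → Fin b, prunedKept b s T u w →
      ℓ ≤ ∑ k ∈ (Finset.Icc 1 T).attach,
        x k.1 (fun i : Fin k.1 => w (Fin.castLE (Finset.mem_Icc.mp k.2).2 i))) :
    (1 - (b : ℝ) ^ (-(s : ℤ))) ^ (α + 1) * ((b : ℝ) ^ (1 / (α - 1)) - 1) ^ (α - 1) * ℓ ^ α ≤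
      ∑ k ∈ Finset.Icc 1 T, ∑ v ∈ Finset.univ.filter (prunedKept b s k u), x k v ^ α :=
  pruned_tree_power_sum_bound_general b s T hb hsT α hα u ℓ hℓ x hx hpath
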